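/- In a finite-state two-player safety game, the winning region of the safety player is the greatest fixed point of the controllable predecessor operator CPre restricted to safe states: W = gfp(X ↦ Safe ∩ CPre(X)), where CPre(X) = {s ∈ S_EGO : ∃ transition from s into X} ∪ {s ∈ S_ALTER : all transitions from s lead into X}. -/
import Mathlib


variable {S : Type*}

/-- A general (history-dependent) strategy for EGO: maps a play prefix
(a nonempty list of states, given as `history ++ [current state]`) to a chosen next state. -/
def ValidStrat (r : S → S → Prop) (ego : S → Prop) (σ : List S → S) : Prop :=
  ∀ (h : List S) (s : S), ego s → r s (σ (h ++ [s]))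

/-- A play `p` starting in `s` that is consistent with the strategy `σ` of EGO. -/
def Consistent (r : S → S → Prop) (ego : S → Prop) (σ : List S → S) (s : S) (p : ℕ → S) : Prop :=
  p 0 = s ∧ ∀ n : ℕ, r (p n) (p (n + 1)) ∧
    (ego (p n) → p (n + 1) = σ (List.ofFn (fun i : Fin (n + 1) => p i)))

/-- The winning region of EGO in the safety game: states from which EGO has a strategy
guaranteeing that all visited states are safe. -/
def WinRegion (r : S → S → Prop) (ego : S → Prop) (Safe : Set S) : Set S :=
  {s | ∃ σ : List S → S, ValidStrat r ego σ ∧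
    ∀ p : ℕ → S, Consistent r ego σ s p → ∀ n : ℕ, p n ∈ Safe}

/-- The controllable-predecessor based operator restricted to safe states. -/
def CPreF (r : S → S → Prop) (ego : S → Prop) (Safe : Set S) (X : Set S) : Set S :=
  Safe ∩ ({s | ego s ∧ ∃ s', r s s' ∧ s' ∈ X} ∪ {s | ¬ ego s ∧ ∀ s', r s s' → s' ∈ X})

lemma ofFn_split (p : ℕ → S) (n : ℕ) :
    List.ofFn (fun i : Fin (n + 1) => p i) =
      (List.ofFn (fun i : Fin n => p i)) ++ [p n] := by
  rw [List.ofFn_succ']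
  simp [List.concat_eq_append, Fin.last]

lemma ofFn_getLastD (p : ℕ → S) (n : ℕ) (d : S) :
    (List.ofFn (fun i : Fin (n + 1) => p i)).getLastD d = p n := by
  rw [ofFn_split, List.getLastD_concat]

lemma cPreF_mono (r : S → S → Prop) (ego : S → Prop) (Safe : Set S) {X Y : Set S}
    (h : X ⊆ Y) : CPreF r ego Safe X ⊆ CPreF r ego Safe Y := by
  rintro s ⟨hs, hc | hc⟩
  · exact ⟨hs, Or.inl ⟨hc.1, hc.2.imp fun t ht => ⟨ht.1, h ht.2⟩⟩⟩
  · exact ⟨hs, Or.inr ⟨hc.1, fun t ht => h (hc.2 t ht)⟩⟩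

lemma cPreF_subset_safe (r : S → S → Prop) (ego : S → Prop) (Safe : Set S) (X : Set S) :
    CPreF r ego Safe X ⊆ Safe := fun _ hs => hs.1

lemma postfixed_subset_win (r : S → S → Prop) (ego : S → Prop) (Safe : Set S)
    (htotal : ∀ s : S, ∃ s', r s s') {X : Set S}
    (hX : X ⊆ CPreF r ego Safe X) : X ⊆ WinRegion r ego Safe := by
  classical
  intro s hs
  have hf : ∀ t : S, ∃ u, r t u ∧ ((ego t ∧ t ∈ X) → u ∈ X) := by
    intro t
    by_cases h : ego t ∧ t ∈ X
    · rcases (hX h.2).2 with hc | hc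
      · obtain ⟨u, hru, hu⟩ := hc.2
        exact ⟨u, hru, fun _ => hu⟩
      · exact absurd h.1 hc.1
    · obtain ⟨u, hu⟩ := htotal t
      exact ⟨u, hu, fun h' => absurd h' h⟩
  choose f hrf hXf using hf
  refine ⟨fun l => f (l.getLastD s), fun h t ht => ?_, fun p hp => ?_⟩
  · show r t (f ((h ++ [t]).getLastD s))
    rw [List.getLastD_concat]; exact hrf t
  · have hmem : ∀ n, p n ∈ X := by
      intro n
      induction n with
      | zero => rw [hp.1]; exact hs
      | succ n ih =>
        obtain ⟨hr, hego⟩ := hp.2 n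
        by_cases he : ego (p n)
        · rw [hego he]
          show f ((List.ofFn fun i : Fin (n+1) => p i).getLastD s) ∈ X
          rw [ofFn_getLastD]
          exact hXf (p n) ⟨he, ih⟩
        · rcases (hX ih).2 with hc | hc
          · exact absurd hc.1 he
          · exact hc.2 _ hr
    exact fun n => (hX (hmem n)).1

lemma nxt_ex (r : S → S → Prop) (ego : S → Prop) (σ : List S → S)
    (htotal : ∀ s : S, ∃ s', r s s') (d : S) (l : List S) :
    ∃ u : S, (ego (l.getLastD d) → u = σ l) ∧ (¬ ego (l.getLastD d) → r (l.getLastD d) u) := by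
  by_cases h : ego (l.getLastD d)
  · exact ⟨σ l, fun _ => rfl, fun h' => absurd h h'⟩
  · obtain ⟨u, hu⟩ := htotal (l.getLastD d)
    exact ⟨u, fun h' => absurd h' h, fun _ => hu⟩

noncomputable def nxt (r : S → S → Prop) (ego : S → Prop) (σ : List S → S)
    (htotal : ∀ s : S, ∃ s', r s s') (d : S) (l : List S) : S :=
  (nxt_ex r ego σ htotal d l).choose

lemma nxt_spec (r : S → S → Prop) (ego : S → Prop) (σ : List S → S)
    (htotal : ∀ s : S, ∃ s', r s s') (d : S) (l : List S) :
    (ego (l.getLastD d) → nxt r ego σ htotal d l = σ l) ∧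
    (¬ ego (l.getLastD d) → r (l.getLastD d) (nxt r ego σ htotal d l)) :=
  (nxt_ex r ego σ htotal d l).choose_spec

noncomputable def playList (r : S → S → Prop) (ego : S → Prop) (σ : List S → S)
    (htotal : ∀ s : S, ∃ s', r s s') (s : S) : ℕ → List S
  | 0 => [s]
  | n + 1 => (playList r ego σ htotal s n) ++ [nxt r ego σ htotal s (playList r ego σ htotal s n)]

lemma exists_consistent (r : S → S → Prop) (ego : S → Prop) (σ : List S → S)
    (hσ : ValidStrat r ego σ) (htotal : ∀ s : S, ∃ s', r s s') (s : S) :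
    ∃ p : ℕ → S, Consistent r ego σ s p := by
  classical
  set g := playList r ego σ htotal s with hg
  set p : ℕ → S := fun n => (g n).getLastD s with hp
  have hstep : ∀ n, g (n + 1) = g n ++ [nxt r ego σ htotal s (g n)] := fun n => rfl
  have hsucc : ∀ n, p (n + 1) = nxt r ego σ htotal s (g n) := by
    intro n
    show (g (n + 1)).getLastD s = _
    rw [hstep, List.getLastD_concat]
  have hcons : ∀ n, g n = List.ofFn (fun i : Fin (n + 1) => p i) := by
    intro n
    induction n with
    | zero => simp [hg, hp, playList, List.ofFn_succ]
    | succ n ih =>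
      rw [hstep, ofFn_split, ← ih, ← hsucc]
  have hegoLast : ∀ n, ego ((g n).getLastD s) ↔ ego (p n) := fun n => Iff.rfl
  refine ⟨p, ?_, fun n => ?_⟩
  · show (g 0).getLastD s = s
    rfl
  · constructor
    · rw [hsucc]
      by_cases he : ego (p n)
      · rw [(nxt_spec r ego σ htotal s (g n)).1 ((hegoLast n).mpr he)]
        have := hσ (List.ofFn (fun i : Fin n => p i)) (p n) he
        rwa [← ofFn_split, ← hcons] at this
      · exact (nxt_spec r ego σ htotal s (g n)).2 (fun h => he ((hegoLast n).mp h))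
    · intro he
      rw [hsucc, (nxt_spec r ego σ htotal s (g n)).1 ((hegoLast n).mpr he), hcons n]

lemma win_subset_cpre (r : S → S → Prop) (ego : S → Prop) (Safe : Set S)
    (htotal : ∀ s : S, ∃ s', r s s') :
    WinRegion r ego Safe ⊆ CPreF r ego Safe (WinRegion r ego Safe) := by
  intro s hs
  obtain ⟨σ, hσ, hwin⟩ := hs
  -- shifted strategy and play extension
  have hshift : ∀ t : S, r s t → (ego s → t = σ [s]) → t ∈ WinRegion r ego Safe := by
    intro t hrt hte
    refine ⟨fun l => σ (s :: l), fun h u hu => hσ (s :: h) u hu, fun p hp => ?_⟩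
    set q : ℕ → S := fun n => Nat.rec s (fun m _ => p m) n with hq
    have hq0 : q 0 = s := rfl
    have hqs : ∀ m, q (m + 1) = p m := fun m => rfl
    have hofq : ∀ n, List.ofFn (fun i : Fin (n + 2) => q i) =
        s :: List.ofFn (fun i : Fin (n + 1) => p i) := by
      intro n
      rw [List.ofFn_succ]
      congr 1
    have hqc : Consistent r ego σ s q := by
      refine ⟨hq0, fun n => ?_⟩
      cases n with
      | zero =>
        refine ⟨by rw [hq0, hqs]; rw [hp.1]; exact hrt, fun he => ?_⟩
        have h1 : List.ofFn (fun i : Fin 1 => q i) = [s] := by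
          simp [List.ofFn_succ, hq0]
        rw [hqs, hp.1, hte he, h1]
      | succ m =>
        obtain ⟨hr, hego⟩ := hp.2 m
        refine ⟨by rw [hqs, hqs]; exact hr, fun he => ?_⟩
        rw [hqs] at he ⊢
        rw [hego he, hofq]
    intro n
    have := hwin q hqc (n + 1)
    rwa [hqs] at this
  have hsafe : s ∈ Safe := by
    obtain ⟨p, hp⟩ := exists_consistent r ego σ hσ htotal s
    have := hwin p hp 0
    rwa [hp.1] at this
  by_cases he : ego s
  · refine ⟨hsafe, Or.inl ⟨he, σ [s], hσ [] s he, ?_⟩⟩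
    exact hshift (σ [s]) (hσ [] s he) (fun _ => rfl)
  · exact ⟨hsafe, Or.inr ⟨he, fun t ht => hshift t ht (fun h => absurd h he)⟩⟩

/-- In a finite-state two-player safety game with a total transition relation, the winning
region of EGO is the greatest fixed point of `X ↦ Safe ∩ CPre X`. -/
theorem winRegion_greatest_fixed_point [Fintype S] (r : S → S → Prop) (ego : S → Prop)
    (Safe : Set S) (htotal : ∀ s : S, ∃ s', r s s') :
    CPreF r ego Safe (WinRegion r ego Safe) = WinRegion r ego Safe ∧
    ∀ X : Set S, CPreF r ego Safe X = X → X ⊆ WinRegion r ego Safe := by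
  have hB := win_subset_cpre r ego Safe htotal
  constructor
  · apply Set.Subset.antisymm
    · exact postfixed_subset_win r ego Safe htotal (cPreF_mono r ego Safe hB)
    · exact hB
  · intro X hX
    exact postfixed_subset_win r ego Safe htotal hX.ge
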